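/- Let $h \in C^2(\mathbb{R})$, and let $G : \mathbb{R} \to \mathbb{R}$ be sublinear and monotone with $G(\alpha) = \frac{1}{2}(\overline{\sigma}^2 \alpha^+ - \underline{\sigma}^2 \alpha^-)$, $\overline{\sigma} \ge \underline{\sigma} > 0$. Suppose $g = f = 0$ (the trivial generators). Then the G-convexity inequality $2G(\tfrac{1}{2}h''(y)z^2 + \tfrac{1}{2}h'(y)A) \ge 2 h'(y) G(\tfrac{1}{2}A)$ for all $y, z, A \in \mathbb{R}$ holds if and only if $h$ is convex (i.e., $h'' \ge 0$) and for all $y, A$: $G(h'(y) A) \ge h'(y) G(A)$. -/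

import Mathlib

/-! With `G` positively homogeneous, the factors `1/2` cancel and the condition reads
`G(h''(y) z² + h'(y) A) ≥ h'(y) G(A)`. Setting `z = 0` gives the second condition; setting
`A = 0`, `z = 1` gives `G(h''(y)) ≥ 0`, which forces `h''(y) ≥ 0` because `G < 0` on negatives.
Conversely, `G` is monotone, so the nonnegative term `h''(y) z²` can only increase the left side. -/

/-- The generator `α ↦ ½(a α⁺ - b α⁻)` of a G-Brownian motion, with `a = σ̄²` and `b = σ²`. -/
noncomputable def gGenerator (a b α : ℝ) : ℝ := (1 / 2) * (a * max α 0 - b * max (-α) 0)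

namespace gGenerator

variable {a b : ℝ}

theorem mul_of_nonneg {c : ℝ} (hc : 0 ≤ c) (α : ℝ) :
    gGenerator a b (c * α) = c * gGenerator a b α := by
  have hpos : max (c * α) 0 = c * max α 0 := by
    rw [mul_max_of_nonneg _ _ hc, mul_zero]
  have hneg : max (-(c * α)) 0 = c * max (-α) 0 := by
    rw [mul_max_of_nonneg _ _ hc, mul_zero, mul_neg]
  simp only [gGenerator, hpos, hneg]
  ring

theorem monotone (ha : 0 ≤ a) (hb : 0 ≤ b) : Monotone (gGenerator a b) := by
  intro α β hαβ
  have hpos : max α 0 ≤ max β 0 := max_le_max_right 0 hαβ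
  have hneg : max (-β) 0 ≤ max (-α) 0 := max_le_max_right 0 (neg_le_neg hαβ)
  unfold gGenerator
  nlinarith [mul_le_mul_of_nonneg_left hpos ha, mul_le_mul_of_nonneg_left hneg hb]

theorem neg_of_neg (hb : 0 < b) {α : ℝ} (hα : α < 0) : gGenerator a b α < 0 := by
  rw [gGenerator, max_eq_right hα.le, max_eq_left (neg_nonneg.mpr hα.le)]
  nlinarith

end gGenerator

section PositivelyHomogeneous

variable {G : ℝ → ℝ} (hhom : ∀ c α, 0 ≤ c → G (c * α) = c * G α)
include hhom

theorem half_form_iff (p q : ℝ) :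
    (∀ z A : ℝ, 2 * G ((1 / 2) * q * z ^ 2 + (1 / 2) * p * A) ≥ 2 * p * G ((1 / 2) * A)) ↔
      ∀ z A : ℝ, G (q * z ^ 2 + p * A) ≥ p * G A := by
  have halve : ∀ α, G ((1 / 2) * α) = (1 / 2) * G α := fun α => hhom _ α (by norm_num)
  refine forall₂_congr fun z A => ?_
  rw [show (1 / 2) * q * z ^ 2 + (1 / 2) * p * A = (1 / 2) * (q * z ^ 2 + p * A) by ring,
    halve, halve]
  constructor <;> intro h <;> linarith

theorem convexity_iff (hmono : Monotone G) (hneg : ∀ α < 0, G α < 0) (p q : ℝ) :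
    (∀ z A : ℝ, G (q * z ^ 2 + p * A) ≥ p * G A) ↔ 0 ≤ q ∧ ∀ A, G (p * A) ≥ p * G A := by
  have hG0 : G 0 = 0 := by simpa using hhom 0 0 le_rfl
  constructor
  · intro H
    refine ⟨?_, fun A => by simpa using H 0 A⟩
    by_contra! hq
    have := H 1 0
    simp only [one_pow, mul_one, mul_zero, add_zero, hG0] at this
    exact (hneg q hq).not_ge this
  · rintro ⟨hq, hsub⟩ z A
    calc G (q * z ^ 2 + p * A) ≥ G (p * A) := hmono (le_add_of_nonneg_left (by positivity))
      _ ≥ p * G A := hsub A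

end PositivelyHomogeneous

theorem G_convexity_trivial_generators_iff_general
    (h : ℝ → ℝ)
    (σbar σund : ℝ) (h2 : σund > 0)
    (G : ℝ → ℝ)
    (hG : ∀ α : ℝ, G α = (1/2) * (σbar^2 * max α 0 - σund^2 * max (-α) 0)) :
    (∀ y z A : ℝ,
        2 * G ((1/2) * deriv (deriv h) y * z^2 + (1/2) * deriv h y * A)
          ≥ 2 * deriv h y * G ((1/2) * A)) ↔
    ((∀ y : ℝ, deriv (deriv h) y ≥ 0) ∧
      (∀ y A : ℝ, G (deriv h y * A) ≥ deriv h y * G A)) := by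
  obtain rfl : G = gGenerator (σbar ^ 2) (σund ^ 2) := funext hG
  have hhom (c α : ℝ) (hc : 0 ≤ c) := gGenerator.mul_of_nonneg (a := σbar ^ 2) (b := σund ^ 2) hc α
  have hmono := gGenerator.monotone (sq_nonneg σbar) (sq_nonneg σund)
  have hneg (α : ℝ) (hα : α < 0) := gGenerator.neg_of_neg (a := σbar ^ 2) (pow_pos h2 2) hα
  have hpointwise (y : ℝ) := (half_form_iff hhom (deriv h y) (deriv (deriv h) y)).trans
    (convexity_iff hhom hmono hneg (deriv h y) (deriv (deriv h) y))
  exact (forall_congr' hpointwise).trans forall_and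

/-- With trivial generators `g = f = 0`, the G-convexity inequality
`2G(½h''(y)z² + ½h'(y)A) ≥ 2h'(y)G(½A)` holds for all `y, z, A` iff `h` is convex
(`h'' ≥ 0`) and `G(h'(y)A) ≥ h'(y)G(A)` for all `y, A`. -/
theorem G_convexity_trivial_generators_iff
    (h : ℝ → ℝ) (hh : ContDiff ℝ 2 h)
    (σbar σund : ℝ) (h1 : σbar ≥ σund) (h2 : σund > 0)
    (G : ℝ → ℝ)
    (hG : ∀ α : ℝ, G α = (1/2) * (σbar^2 * max α 0 - σund^2 * max (-α) 0)) :
    (∀ y z A : ℝ,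
        2 * G ((1/2) * deriv (deriv h) y * z^2 + (1/2) * deriv h y * A)
          ≥ 2 * deriv h y * G ((1/2) * A)) ↔
    ((∀ y : ℝ, deriv (deriv h) y ≥ 0) ∧
      (∀ y A : ℝ, G (deriv h y * A) ≥ deriv h y * G A)) :=
  G_convexity_trivial_generators_iff_general h σbar σund h2 G hG
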